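/- There exists a constant C > 0 such that the Gaussian isoperimetric profile satisfies I(x) ≥ C · x(1-x) · √(log(1/(x(1-x)))) for all x ∈ (0,1). -/

import Mathlib

open Real

noncomputable def gaussPhi (x : ℝ) : ℝ := (Real.sqrt (2 * Real.pi))⁻¹ * Real.exp (-x ^ 2 / 2)

noncomputable def gaussCDF (x : ℝ) : ℝ := ∫ t in Set.Iic x, gaussPhi t

noncomputable def isoProfile (s : ℝ) : ℝ :=
  if s = 0 ∨ s = 1 then 0 else gaussPhi (Function.invFun gaussCDF s)

/-! Write `q = 1 - Φ t` for the Gaussian tail; by the symmetry `Φ (-t) = 1 - Φ t` it suffices to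
treat `t ≥ 0`, where `x = Φ t ≥ 1/2` gives `x (1 - x) ≤ q` and `1 / (x (1 - x)) ≤ 2 / q`.
Two elementary tail bounds then do the job: Mills' inequality `t q ≤ φ t`, and the crude lower
bound `q ≥ ∫ₜᵗ⁺¹ φ ≥ φ (t + 1)`, which gives `log (2 / q) ≤ (t + 2)²`. Hence
`q √(log (2 / q)) ≤ t q + 2 q ≤ 7 φ t`, using `q ≤ 3 φ t` (from `q ≤ 1/2 ≤ 3 φ 1` on `[0, 1]`
and from Mills beyond). -/

open MeasureTheory ProbabilityTheory Set Filter Topology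

lemma gaussPhi_eq_gaussianPDFReal : gaussPhi = gaussianPDFReal 0 1 := by
  ext x
  simp [gaussPhi, gaussianPDFReal]

lemma gaussPhi_pos (x : ℝ) : 0 < gaussPhi x := by
  unfold gaussPhi
  positivity

lemma gaussPhi_neg (x : ℝ) : gaussPhi (-x) = gaussPhi x := by
  simp [gaussPhi]

lemma continuous_gaussPhi : Continuous gaussPhi := by
  unfold gaussPhi
  fun_prop

lemma integrable_gaussPhi : Integrable gaussPhi :=
  gaussPhi_eq_gaussianPDFReal ▸ integrable_gaussianPDFReal 0 1

lemma gaussPhi_antitoneOn : AntitoneOn gaussPhi (Ici 0) := by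
  intro a ha b _ hab
  unfold gaussPhi
  gcongr

lemma hasDerivAt_gaussPhi (x : ℝ) : HasDerivAt gaussPhi (-x * gaussPhi x) x := by
  have h : HasDerivAt (fun y => -y ^ 2 / 2) (-x) x :=
    ((hasDerivAt_pow 2 x).neg.div_const 2).congr_deriv (by push_cast; ring)
  exact (h.exp.const_mul (√(2 * π))⁻¹).congr_deriv (by unfold gaussPhi; ring)

lemma measureReal_gaussianReal (s : Set ℝ) :
    (gaussianReal 0 1).real s = ∫ x in s, gaussPhi x := by
  rw [measureReal_def, gaussianReal_apply_eq_integral _ one_ne_zero, ← gaussPhi_eq_gaussianPDFReal,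
    ENNReal.toReal_ofReal (setIntegral_nonneg_of_ae (ae_of_all _ fun x => (gaussPhi_pos x).le))]

lemma gaussCDF_eq_cdf : gaussCDF = cdf (gaussianReal 0 1) := by
  ext x
  rw [cdf_eq_real, measureReal_gaussianReal]
  rfl

lemma one_sub_gaussCDF (x : ℝ) : 1 - gaussCDF x = ∫ t in Ioi x, gaussPhi t := by
  rw [← measureReal_gaussianReal, ← compl_Iic, probReal_compl_eq_one_sub measurableSet_Iic,
    measureReal_gaussianReal]
  rfl

lemma gaussCDF_neg (x : ℝ) : gaussCDF (-x) = 1 - gaussCDF x := by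
  rw [one_sub_gaussCDF, gaussCDF, ← integral_comp_neg_Ioi]
  simp only [gaussPhi_neg]

lemma gaussCDF_zero : gaussCDF 0 = 1 / 2 := by
  have h := gaussCDF_neg 0
  rw [neg_zero] at h
  linarith

lemma monotone_gaussCDF : Monotone gaussCDF :=
  gaussCDF_eq_cdf ▸ (cdf (gaussianReal 0 1)).mono

lemma one_sub_gaussCDF_le_half {t : ℝ} (ht : 0 ≤ t) : 1 - gaussCDF t ≤ 1 / 2 := by
  linarith [gaussCDF_zero ▸ monotone_gaussCDF ht]

lemma continuous_gaussCDF : Continuous gaussCDF := by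
  have h (x : ℝ) : gaussCDF x = gaussCDF 0 + ∫ t in (0)..x, gaussPhi t := by
    rw [← intervalIntegral.integral_Iic_sub_Iic integrable_gaussPhi.integrableOn
      integrable_gaussPhi.integrableOn]
    unfold gaussCDF
    ring
  rw [funext h]
  exact continuous_const.add
    (intervalIntegral.continuous_primitive (fun _ _ => continuous_gaussPhi.intervalIntegrable _ _) 0)

lemma exists_gaussCDF_eq {x : ℝ} (hx : x ∈ Ioo (0 : ℝ) 1) : ∃ t, gaussCDF t = x := by
  obtain ⟨a, ha⟩ := ((gaussCDF_eq_cdf ▸ tendsto_cdf_atBot (gaussianReal 0 1)).eventually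
    (gt_mem_nhds hx.1)).exists
  obtain ⟨b, hb⟩ := ((gaussCDF_eq_cdf ▸ tendsto_cdf_atTop (gaussianReal 0 1)).eventually
    (lt_mem_nhds hx.2)).exists
  exact intermediate_value_univ a b continuous_gaussCDF ⟨ha.le, hb.le⟩

lemma integrable_mul_gaussPhi : Integrable fun s => s * gaussPhi s := by
  refine ((integrable_mul_exp_neg_mul_sq (by norm_num : (0 : ℝ) < 1 / 2)).const_mul
    (√(2 * π))⁻¹).congr (ae_of_all _ fun s => ?_)
  simp only [gaussPhi]
  ring_nf

lemma tendsto_gaussPhi_atTop : Tendsto gaussPhi atTop (𝓝 0) := by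
  have h : Tendsto (fun x : ℝ => -x ^ 2 / 2) atTop atBot :=
    (tendsto_neg_atTop_atBot.comp (tendsto_pow_atTop two_ne_zero)).atBot_div_const two_pos
  have h' := (tendsto_exp_atBot.comp h).const_mul (√(2 * π))⁻¹
  rw [mul_zero] at h'
  exact h'

lemma integral_Ioi_mul_gaussPhi (t : ℝ) : ∫ s in Ioi t, s * gaussPhi s = gaussPhi t := by
  have h := integral_Ioi_of_hasDerivAt_of_tendsto (f := fun s => -gaussPhi s) (a := t)
    continuous_gaussPhi.neg.continuousWithinAt
    (fun x _ => by rw [← neg_neg (x * gaussPhi x), ← neg_mul]; exact (hasDerivAt_gaussPhi x).neg)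
    integrable_mul_gaussPhi.integrableOn (by simpa using tendsto_gaussPhi_atTop.neg)
  simpa using h

/-- Mills' inequality: integrate `t ≤ s` against the density on `(t, ∞)`. -/
lemma mul_one_sub_gaussCDF_le (t : ℝ) : t * (1 - gaussCDF t) ≤ gaussPhi t := by
  rw [one_sub_gaussCDF, ← integral_Ioi_mul_gaussPhi, ← integral_const_mul]
  exact setIntegral_mono_on (integrable_gaussPhi.integrableOn.const_mul t)
    integrable_mul_gaussPhi.integrableOn measurableSet_Ioi
    fun s hs => mul_le_mul_of_nonneg_right hs.le (gaussPhi_pos s).le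

lemma gaussPhi_add_one_le_one_sub_gaussCDF {t : ℝ} (ht : 0 ≤ t) :
    gaussPhi (t + 1) ≤ 1 - gaussCDF t := by
  rw [one_sub_gaussCDF]
  calc gaussPhi (t + 1) = ∫ _ in Ioc t (t + 1), gaussPhi (t + 1) := by simp
    _ ≤ ∫ s in Ioc t (t + 1), gaussPhi s :=
        setIntegral_mono_on (integrableOn_const (by simp)) integrable_gaussPhi.integrableOn
          measurableSet_Ioc fun s hs =>
            gaussPhi_antitoneOn (ht.trans hs.1.le) (by simp only [mem_Ici]; linarith) hs.2
    _ ≤ ∫ s in Ioi t, gaussPhi s :=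
        setIntegral_mono_set integrable_gaussPhi.integrableOn
          (ae_of_all _ fun s => (gaussPhi_pos s).le) Ioc_subset_Ioi_self.eventuallyLE

lemma sqrt_two_pi_le_three : √(2 * π) ≤ 3 := by
  rw [sqrt_le_left (by norm_num)]
  linarith [pi_le_four]

lemma one_div_six_le_gaussPhi_one : 1 / 6 ≤ gaussPhi 1 := by
  have hexp : 1 / 2 ≤ exp (-1 ^ 2 / 2) := by linarith [add_one_le_exp (-1 ^ 2 / 2 : ℝ)]
  have hinv : 1 / 3 ≤ (√(2 * π))⁻¹ := by
    rw [one_div]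
    exact inv_anti₀ (by positivity) sqrt_two_pi_le_three
  calc (1 / 6 : ℝ) = 1 / 3 * (1 / 2) := by norm_num
    _ ≤ gaussPhi 1 := mul_le_mul hinv hexp (by norm_num) (by positivity)

lemma one_sub_gaussCDF_le_three_mul_gaussPhi {t : ℝ} (ht : 0 ≤ t) :
    1 - gaussCDF t ≤ 3 * gaussPhi t := by
  rcases le_total t 1 with ht1 | ht1
  · linarith [one_sub_gaussCDF_le_half ht, one_div_six_le_gaussPhi_one,
      gaussPhi_antitoneOn ht (mem_Ici.2 zero_le_one) ht1]
  · nlinarith [mul_one_sub_gaussCDF_le t, gaussPhi_pos t]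

lemma log_two_div_one_sub_gaussCDF_le {t : ℝ} (ht : 0 ≤ t) :
    log (2 / (1 - gaussCDF t)) ≤ (t + 2) ^ 2 := by
  have hq := gaussPhi_add_one_le_one_sub_gaussCDF ht
  have hq0 := (gaussPhi_pos (t + 1)).trans_le hq
  have hexp3 : 6 ≤ exp 3 := by linarith [quadratic_le_exp_of_nonneg (by norm_num : (0 : ℝ) ≤ 3)]
  rw [log_le_iff_le_exp (by positivity), div_le_iff₀ hq0]
  calc (2 : ℝ) ≤ exp 3 / 3 := by linarith
    _ ≤ exp ((t + 2) ^ 2 - (t + 1) ^ 2 / 2) / √(2 * π) := by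
        gcongr
        · nlinarith
        · exact sqrt_two_pi_le_three
    _ = exp ((t + 2) ^ 2) * gaussPhi (t + 1) := by
        rw [gaussPhi, sub_eq_add_neg, exp_add]
        ring_nf
    _ ≤ exp ((t + 2) ^ 2) * (1 - gaussCDF t) := by gcongr

lemma one_sub_gaussCDF_mul_sqrt_log_le {t : ℝ} (ht : 0 ≤ t) :
    (1 - gaussCDF t) * √(log (2 / (1 - gaussCDF t))) ≤ 7 * gaussPhi t := by
  have hq0 : 0 ≤ 1 - gaussCDF t :=
    (gaussPhi_pos _).le.trans (gaussPhi_add_one_le_one_sub_gaussCDF ht)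
  have hsqrt : √(log (2 / (1 - gaussCDF t))) ≤ t + 2 :=
    sqrt_le_iff.2 ⟨by linarith, log_two_div_one_sub_gaussCDF_le ht⟩
  calc (1 - gaussCDF t) * √(log (2 / (1 - gaussCDF t))) ≤ (1 - gaussCDF t) * (t + 2) := by gcongr
    _ = t * (1 - gaussCDF t) + 2 * (1 - gaussCDF t) := by ring
    _ ≤ 7 * gaussPhi t := by
        linarith [mul_one_sub_gaussCDF_le t, one_sub_gaussCDF_le_three_mul_gaussPhi ht]

lemma gaussCDF_mul_one_sub_mul_sqrt_log_le (t : ℝ) :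
    gaussCDF t * (1 - gaussCDF t) * √(log (1 / (gaussCDF t * (1 - gaussCDF t))))
      ≤ 7 * gaussPhi t := by
  wlog ht : 0 ≤ t generalizing t
  · have h := this (-t) (by linarith)
    rwa [gaussCDF_neg, gaussPhi_neg, sub_sub_cancel, mul_comm (1 - gaussCDF t)] at h
  have hp : 1 / 2 ≤ gaussCDF t := gaussCDF_zero ▸ monotone_gaussCDF ht
  have hq : 0 < 1 - gaussCDF t :=
    (gaussPhi_pos _).trans_le (gaussPhi_add_one_le_one_sub_gaussCDF ht)
  have hpq : gaussCDF t * (1 - gaussCDF t) ≤ 1 - gaussCDF t := by nlinarith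
  have hpq0 : 0 < gaussCDF t * (1 - gaussCDF t) := by nlinarith
  have hlog : log (1 / (gaussCDF t * (1 - gaussCDF t))) ≤ log (2 / (1 - gaussCDF t)) := by
    refine log_le_log (by positivity) ?_
    rw [div_le_div_iff₀ hpq0 hq]
    nlinarith
  calc gaussCDF t * (1 - gaussCDF t) * √(log (1 / (gaussCDF t * (1 - gaussCDF t))))
      ≤ (1 - gaussCDF t) * √(log (2 / (1 - gaussCDF t))) := by gcongr
    _ ≤ 7 * gaussPhi t := one_sub_gaussCDF_mul_sqrt_log_le ht

theorem stmt2 :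
    ∃ C > 0, ∀ x ∈ Set.Ioo (0:ℝ) 1,
      C * (x * (1 - x)) * Real.sqrt (Real.log (1 / (x * (1 - x)))) ≤ isoProfile x := by
  refine ⟨1 / 7, by norm_num, fun x hx => ?_⟩
  set t := Function.invFun gaussCDF x
  have hiso : isoProfile x = gaussPhi t := by
    rw [isoProfile, if_neg (by rintro (h | h) <;> linarith [hx.1, hx.2])]
  have h := gaussCDF_mul_one_sub_mul_sqrt_log_le t
  rw [show gaussCDF t = x from Function.invFun_eq (exists_gaussCDF_eq hx)] at h
  rw [hiso, mul_assoc]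
  linarith
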